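/- arXiv:2307.09179 — 2 statements merged into one kernel-verified Lean document; each statement's English description precedes it below -/
import Mathlib

section
/- Let G be a connected finite simple block graph and let v and w be distinct vertices of G. Then there is a unique shortest path in G connecting v and w, and this shortest path is an induced path of G. -/
open SimpleGraph

/-- An induced path in a simple graph `G`: a walk which is a path and such that the
subgraph of `G` induced on its vertex set equals the path. -/
structure InducedPath {V : Type*} (G : SimpleGraph V) where
  first : V
  last : V
  walk : G.Walk first last
  isPath : walk.IsPath
  induced : ∀ x ∈ walk.support, ∀ y ∈ walk.support, G.Adj x y → s(x, y) ∈ walk.edges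

namespace InducedPath

variable {V : Type*} {G : SimpleGraph V}

/-- The vertex set of an induced path. -/
def vertexSet (P : InducedPath G) : Set V := {v | v ∈ P.walk.support}

/-- The edge set of an induced path. -/
def edgeSet (P : InducedPath G) : Set (Sym2 V) := {e | e ∈ P.walk.edges}

/-- The terminal vertices `∂P` of an induced path. -/
def boundary (P : InducedPath G) : Set V := {P.first, P.last}

/-- The internal vertices `P°` of an induced path. -/
def interior (P : InducedPath G) : Set V := P.vertexSet \ P.boundary

end InducedPath

section FamilyDefs

variable {V : Type*} (G : SimpleGraph V) {ℓ : ℕ}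

/-- `Q` contains `P` as a subgraph. -/
def PathContains (Q P : InducedPath G) : Prop :=
  P.vertexSet ⊆ Q.vertexSet ∧ P.edgeSet ⊆ Q.edgeSet

/-- The vertex set of `P_ind`, the induced subgraph on `⋃ i, V(P i)`. -/
def famVerts (P : Fin ℓ → InducedPath G) : Set V := ⋃ i, (P i).vertexSet

/-- The union of the edge sets of the paths `P i`. -/
def famEdges (P : Fin ℓ → InducedPath G) : Set (Sym2 V) := ⋃ i, (P i).edgeSet

/-- The paths `P i` are pairwise vertex-disjoint. -/
def PairwiseVertexDisjoint (P : Fin ℓ → InducedPath G) : Prop :=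
  ∀ i j : Fin ℓ, i ≠ j → Disjoint (P i).vertexSet (P j).vertexSet

/-- `φ` is an orientation of the induced path `P`, i.e. a surjection `{1,2} → ∂P`. -/
def IsOrientation (P : InducedPath G) (φ : Fin 2 → V) : Prop :=
  Set.range φ = P.boundary

/-- `Q` is an induced path of `P_ind` (equivalently, an induced path of `G` all of whose
vertices belong to `⋃ i, V(P i)`). -/
def IsPathOfInd (P : Fin ℓ → InducedPath G) (Q : InducedPath G) : Prop :=
  Q.vertexSet ⊆ famVerts G P

/-- The data `(P, σ, φ)` is DOIP. -/
def IsDOIPData (P : Fin ℓ → InducedPath G) (σ : Equiv.Perm (Fin ℓ))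
    (φ : Fin ℓ → Fin 2 → V) : Prop :=
  (∀ i, IsOrientation G (P i) (φ i)) ∧
    ∀ i j : Fin ℓ, σ i ≤ σ j → ∀ Q : InducedPath G, IsPathOfInd G P Q →
      ({Q.first, Q.last} : Set V) = {φ (σ i) 0, φ (σ j) 1} →
      ∃ k, PathContains G Q (P k)

/-- The family `P` is DOIP: there exist `σ` and orientations making it DOIP. -/
def FamilyDOIP (P : Fin ℓ → InducedPath G) : Prop :=
  ∃ (σ : Equiv.Perm (Fin ℓ)) (φ : Fin ℓ → Fin 2 → V), IsDOIPData G P σ φ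

/-- `Q` realizes an arc `(i,j)` of the directed multigraph `K_{P_ind}`. -/
def KArcWitness (P : Fin ℓ → InducedPath G) (φ : Fin ℓ → Fin 2 → V) (i j : Fin ℓ)
    (Q : InducedPath G) : Prop :=
  IsPathOfInd G P Q ∧ ({Q.first, Q.last} : Set V) = {φ i 0, φ j 1} ∧
    ∀ k, ¬ PathContains G Q (P k)

/-- `(i,j)` is an arc of `K_{P_ind}`. -/
def KArc (P : Fin ℓ → InducedPath G) (φ : Fin ℓ → Fin 2 → V) (i j : Fin ℓ) : Prop :=
  ∃ Q : InducedPath G, KArcWitness G P φ i j Q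

/-- The directed multigraph `K_{P_ind}` is directed acyclic (no loops and no directed
cycles). -/
def KAcyclic (P : Fin ℓ → InducedPath G) (φ : Fin ℓ → Fin 2 → V) : Prop :=
  ∀ i : Fin ℓ, ¬ Relation.TransGen (KArc G P φ) i i

/-- `Q` is a strand of `P_ind` from `P i` to `P j`. -/
def IsStrand (P : Fin ℓ → InducedPath G) (φ : Fin ℓ → Fin 2 → V) (i j : Fin ℓ)
    (Q : InducedPath G) : Prop :=
  i ≠ j ∧ IsPathOfInd G P Q ∧ Q.first ≠ φ i 1 ∧ Q.last ≠ φ j 0 ∧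
    Q.vertexSet ∩ (P i).vertexSet = {Q.first} ∧
    Q.vertexSet ∩ (P j).vertexSet = {Q.last} ∧
    ∀ k, ¬ PathContains G Q (P k)

/-- `Q` is an internal strand of `P_ind` from `P i` to `P j`. -/
def IsInternalStrand (P : Fin ℓ → InducedPath G) (i j : Fin ℓ) (Q : InducedPath G) : Prop :=
  i ≠ j ∧ IsPathOfInd G P Q ∧
    Q.first ∈ (P i).interior ∧ Q.last ∈ (P j).interior ∧
    Q.vertexSet ∩ (P i).vertexSet = {Q.first} ∧
    Q.vertexSet ∩ (P j).vertexSet = {Q.last} ∧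
    ∀ k, ¬ PathContains G Q (P k)

/-- `(Q, b, c)` is an internal fork of `P_ind` from `P i` to `P j`. -/
def IsInternalFork (P : Fin ℓ → InducedPath G) (i j : Fin ℓ) (Q : InducedPath G)
    (b c : V) : Prop :=
  i ≠ j ∧ IsPathOfInd G P Q ∧ Q.first ∈ (P i).interior ∧
    Q.vertexSet ∩ (P i).vertexSet = {Q.first} ∧
    Q.vertexSet ∩ (P j).vertexSet = ∅ ∧
    b ∈ (P j).vertexSet ∧ c ∈ (P j).vertexSet ∧ b ≠ c ∧
    G.Adj Q.last b ∧ G.Adj Q.last c ∧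
    ∀ k, ¬ PathContains G Q (P k)

/-- `(Q, a, b, c, d)` is a double fork of `P_ind` from `P i` to `P j`. -/
def IsDoubleFork (P : Fin ℓ → InducedPath G) (i j : Fin ℓ) (Q : InducedPath G)
    (a b c d : V) : Prop :=
  i ≠ j ∧ IsPathOfInd G P Q ∧
    Q.vertexSet ∩ (P i).vertexSet = ∅ ∧
    Q.vertexSet ∩ (P j).vertexSet = ∅ ∧
    a ∈ (P i).vertexSet ∧ b ∈ (P i).vertexSet ∧ a ≠ b ∧
    c ∈ (P j).vertexSet ∧ d ∈ (P j).vertexSet ∧ c ≠ d ∧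
    G.Adj Q.first a ∧ G.Adj Q.first b ∧ G.Adj Q.last c ∧ G.Adj Q.last d ∧
    ∀ k, ¬ PathContains G Q (P k)

/-- `(a, b, c, d)` is a complete ladder of `P_ind` between `P i` and `P j`. -/
def IsCompleteLadder (P : Fin ℓ → InducedPath G) (i j : Fin ℓ) (a b c d : V) : Prop :=
  i ≠ j ∧ a ∈ (P i).vertexSet ∧ b ∈ (P i).vertexSet ∧ a ≠ b ∧
    c ∈ (P j).vertexSet ∧ d ∈ (P j).vertexSet ∧ c ≠ d ∧
    G.Adj a b ∧ G.Adj a c ∧ G.Adj a d ∧ G.Adj b c ∧ G.Adj b d ∧ G.Adj c d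

/-- `P_ind` contains an internal strand, an internal fork, a double fork, or a
complete ladder. -/
def HasForbidden (P : Fin ℓ → InducedPath G) : Prop :=
  (∃ i j Q, IsInternalStrand G P i j Q) ∨
  (∃ i j Q b c, IsInternalFork G P i j Q b c) ∨
  (∃ i j Q a b c d, IsDoubleFork G P i j Q a b c d) ∨
  (∃ i j a b c d, IsCompleteLadder G P i j a b c d)

/-- `P_ind` contains a complete ladder, or an internal strand, internal fork, or double
fork which is edge-disjoint from the family `P`. -/
def HasForbiddenEdgeDisjoint (P : Fin ℓ → InducedPath G) : Prop :=
  (∃ i j Q, IsInternalStrand G P i j Q ∧ Disjoint Q.edgeSet (famEdges G P)) ∨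
  (∃ i j Q b c, IsInternalFork G P i j Q b c ∧
    Disjoint (Q.edgeSet ∪ {s(Q.last, b), s(Q.last, c)}) (famEdges G P)) ∨
  (∃ i j Q a b c d, IsDoubleFork G P i j Q a b c d ∧
    Disjoint (Q.edgeSet ∪ {s(Q.first, a), s(Q.first, b), s(Q.last, c), s(Q.last, d)})
      (famEdges G P)) ∨
  (∃ i j a b c d, IsCompleteLadder G P i j a b c d)

end FamilyDefs

section Invariants

variable {V : Type*}

/-- The invariant `ν(G)`: the maximal total number of edges of a family of
vertex-disjoint induced paths of `G` which is DOIP. -/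
noncomputable def nu (G : SimpleGraph V) : ℕ :=
  sSup {n : ℕ | ∃ (ℓ : ℕ) (P : Fin ℓ → InducedPath G),
    PairwiseVertexDisjoint G P ∧ FamilyDOIP G P ∧ n = ∑ i, (P i).walk.length}

/-- `ℓ(G)`: the number of edges of a longest induced path of `G`. -/
noncomputable def longestInducedPathLength (G : SimpleGraph V) : ℕ :=
  sSup {n : ℕ | ∃ P : InducedPath G, n = P.walk.length}

end Invariants

section BlockGraphs

variable {V : Type*} {G : SimpleGraph V}

/-- A subgraph is biconnected if it is connected and remains connected after
deleting any single vertex. -/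
def SubgraphBiconnected (H : G.Subgraph) : Prop :=
  H.coe.Connected ∧ ∀ v : V, ((H.deleteVerts {v}).coe).Connected

/-- A block of `G` is a maximal biconnected subgraph. -/
def IsBlock (H : G.Subgraph) : Prop :=
  SubgraphBiconnected H ∧ ∀ H' : G.Subgraph, SubgraphBiconnected H' → H ≤ H' → H' = H

/-- `G` is a block graph if every block of `G` is a complete graph. -/
def IsBlockGraph (G : SimpleGraph V) : Prop :=
  ∀ H : G.Subgraph, IsBlock H → ∀ a ∈ H.verts, ∀ b ∈ H.verts, a ≠ b → H.Adj a b

/-- The intersection `Q ∩ R` of two induced paths, as a subgraph of `G`. -/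
def pathsInter (Q R : InducedPath G) : G.Subgraph where
  verts := Q.vertexSet ∩ R.vertexSet
  Adj a b := G.Adj a b ∧ s(a, b) ∈ Q.walk.edges ∧ s(a, b) ∈ R.walk.edges
  adj_sub h := h.1
  edge_vert h := ⟨Q.walk.fst_mem_support_of_mem_edges h.2.1,
    R.walk.fst_mem_support_of_mem_edges h.2.2⟩
  symm := by
    constructor
    intro a b h
    refine ⟨h.1.symm, ?_, ?_⟩
    · rw [Sym2.eq_swap]; exact h.2.1
    · rw [Sym2.eq_swap]; exact h.2.2

/-- `s` is a maximal clique of `G`. -/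
def IsMaxClique (G : SimpleGraph V) (s : Set V) : Prop :=
  G.IsClique s ∧ ∀ t : Set V, G.IsClique t → s ⊆ t → s = t

/-- `G` has the two-block property: every vertex belongs to at most two maximal
cliques. -/
def TwoBlockProperty (G : SimpleGraph V) : Prop :=
  ∀ v : V, ({s : Set V | IsMaxClique G s ∧ v ∈ s}).ncard ≤ 2

/-- The completion `G_c` of `G` at the vertex `c`. -/
def completionAt (G : SimpleGraph V) (c : V) : SimpleGraph V where
  Adj u w := G.Adj u w ∨ (u ≠ w ∧ G.Adj c u ∧ G.Adj c w)
  symm := by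
    constructor
    intro u w h
    rcases h with h | ⟨hne, h1, h2⟩
    · exact Or.inl h.symm
    · exact Or.inr ⟨hne.symm, h2, h1⟩
  loopless := by
    constructor
    intro u h
    rcases h with h | ⟨hne, _, _⟩
    · exact G.irrefl h
    · exact hne rfl

/-- The number of connected components of a graph. -/
noncomputable def numComponents (G : SimpleGraph V) : ℕ :=
  Nat.card G.ConnectedComponent

/-- `c` is a cut vertex of `G`: deleting it strictly increases the number of
connected components. -/
def IsCutVertex (G : SimpleGraph V) (c : V) : Prop :=
  numComponents G < numComponents (G.induce ({c}ᶜ : Set V))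

end BlockGraphs

/-! A cycle is biconnected, so it lies in a block; blocks of a block graph are complete, so any
two vertices on a common cycle are adjacent. Two distinct shortest `v`–`w` paths contain
subpaths with common ends `a`, `b` which together form a cycle. Subpaths of shortest paths are
shortest, and `a`, `b` are adjacent, so both subpaths are single edges and the cycle would have
length 2. Finally, in any graph a shortest path is chordless: its subpath between two adjacent
vertices is again shortest, hence the edge joining them. -/

namespace SimpleGraph.Walk

variable {V : Type*} {G : SimpleGraph V}

lemma exists_isSubwalk_of_mem_support {u v x y : V} {p : G.Walk u v}
    (hx : x ∈ p.support) (hy : y ∈ p.support) :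
    (∃ q : G.Walk x y, q.IsSubwalk p) ∨ ∃ q : G.Walk y x, q.IsSubwalk p := by
  classical
  rw [← p.take_spec hy, mem_support_append_iff] at hx
  rcases hx with hx | hx
  · exact .inl ⟨_,
      ((p.takeUntil y hy).isSubwalk_dropUntil hx).trans (p.isSubwalk_takeUntil hy)⟩
  · exact .inr ⟨_,
      ((p.dropUntil y hy).isSubwalk_takeUntil hx).trans (p.isSubwalk_dropUntil hy)⟩

lemma mem_edges_of_isSubwalk_of_length_eq_dist {u v x y : V} {p : G.Walk u v}
    (hp : p.length = G.dist u v) {q : G.Walk x y} (hq : q.IsSubwalk p) (hxy : G.Adj x y) :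
    s(x, y) ∈ p.edges := by
  have hlen : q.length = 1 :=
    (length_eq_dist_of_subwalk hp hq).trans (dist_eq_one_iff_adj.mpr hxy)
  have hq_eq : q = hxy.toWalk := eq_of_length_le_one hlen.le (by simp)
  exact hq.edges_subset (by simp [hq_eq])

lemma isChordless_of_length_eq_dist {u v : V} {p : G.Walk u v} (hp : p.length = G.dist u v) :
    p.IsChordless := by
  rw [isChordless_iff_forall_mem_edges]
  intro x y hx hy hxy
  rcases exists_isSubwalk_of_mem_support hx hy with ⟨q, hq⟩ | ⟨q, hq⟩
  · exact mem_edges_of_isSubwalk_of_length_eq_dist hp hq hxy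
  · exact Sym2.eq_swap ▸ mem_edges_of_isSubwalk_of_length_eq_dist hp hq hxy.symm

/-- Deleting the base vertex leaves the path `c.tail.dropLast`, which spans what remains. -/
lemma IsCycle.connected_toSubgraph_deleteVerts_start {z : V} {c : G.Walk z z}
    (hc : c.IsCycle) : (c.toSubgraph.deleteVerts {z}).Connected := by
  set P := c.tail.dropLast
  have htail : ¬ c.tail.Nil := by
    rw [← length_eq_zero_iff, length_tail]; have := hc.three_le_length; omega
  have hsupp : c.support = z :: (P.support ++ [z]) := by
    rw [support_dropLast_concat htail, cons_support_tail hc.not_nil]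
  have hzP : z ∉ P.support := by
    have := hc.isPath_tail.support_nodup
    rw [← support_dropLast_concat htail, List.nodup_append] at this
    exact fun h => this.2.2 z h z (by simp) rfl
  refine P.toSubgraph_connected.mono' (fun a b hab => ?_) ?_
  · have haP := mem_support_of_adj_toSubgraph hab
    have hbP := mem_support_of_adj_toSubgraph hab.symm
    rw [Subgraph.deleteVerts_adj]
    refine ⟨by simp [hsupp, haP], ne_of_mem_of_not_mem haP hzP, by simp [hsupp, hbP],
      ne_of_mem_of_not_mem hbP hzP, ?_⟩
    exact adj_toSubgraph_iff_mem_edges.mpr <|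
      c.isSubwalk_rfl.tail.dropLast.edges_subset (adj_toSubgraph_iff_mem_edges.mp hab)
  · ext a
    rw [Subgraph.deleteVerts_verts, Set.mem_sdiff, mem_verts_toSubgraph, mem_verts_toSubgraph,
      hsupp]
    constructor
    · exact fun ha => ⟨by simp [ha], ne_of_mem_of_not_mem ha hzP⟩
    · rintro ⟨ha, haz⟩
      simpa [Set.mem_singleton_iff.not.mp haz] using ha

lemma IsCycle.connected_toSubgraph_deleteVerts {u : V} {c : G.Walk u u} (hc : c.IsCycle)
    (z : V) : (c.toSubgraph.deleteVerts {z}).Connected := by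
  classical
  by_cases hz : z ∈ c.support
  · rw [← toSubgraph_rotate c hz]
    exact (hc.rotate hz).connected_toSubgraph_deleteVerts_start
  · have hz' : c.toSubgraph.verts ∩ {z} = ∅ := by simpa [Set.inter_singleton_eq_empty]
    rw [← Subgraph.deleteVerts_inter_verts_left_eq, hz', Subgraph.deleteVerts_empty]
    exact c.toSubgraph_connected

lemma IsCycle.subgraphBiconnected_toSubgraph {u : V} {c : G.Walk u u} (hc : c.IsCycle) :
    SubgraphBiconnected c.toSubgraph :=
  ⟨c.toSubgraph_connected.coe, fun z => (hc.connected_toSubgraph_deleteVerts z).coe⟩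

end SimpleGraph.Walk

section BlockGraph

variable {V : Type*} [Finite V] {G : SimpleGraph V}

lemma SubgraphBiconnected.exists_isBlock_le {H : G.Subgraph} (hH : SubgraphBiconnected H) :
    ∃ B : G.Subgraph, IsBlock B ∧ H ≤ B := by
  obtain ⟨B, hHB, hB⟩ := Finite.exists_le_maximal hH
  exact ⟨B, ⟨hB.prop, fun B' hB' hBB' => (hB.eq_of_le hB' hBB').symm⟩, hHB⟩

lemma IsBlockGraph.adj_of_mem_support_of_isCycle (hG : IsBlockGraph G) {u a b : V}
    {c : G.Walk u u} (hc : c.IsCycle) (ha : a ∈ c.support) (hb : b ∈ c.support)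
    (hab : a ≠ b) : G.Adj a b := by
  obtain ⟨B, hB, hcB⟩ := hc.subgraphBiconnected_toSubgraph.exists_isBlock_le
  exact B.adj_sub <| hG B hB a (hcB.1 <| c.mem_verts_toSubgraph.mpr ha)
    b (hcB.1 <| c.mem_verts_toSubgraph.mpr hb) hab

lemma IsBlockGraph.eq_of_length_eq_dist (hG : IsBlockGraph G) {u v : V} {p q : G.Walk u v}
    (hp : p.length = G.dist u v) (hq : q.length = G.dist u v) : p = q := by
  by_contra hne
  obtain ⟨a, b, p', q', hp', hq', hc⟩ :=
    (p.isPath_of_length_eq_dist hp).exists_isCycle_of_ne (q.isPath_of_length_eq_dist hq) hne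
  have hdist : G.dist a b ≤ 1 := by
    by_cases hab : a = b
    · simp [hab]
    · refine (dist_eq_one_iff_adj.mpr <| hG.adj_of_mem_support_of_isCycle hc
        (Walk.start_mem_support _) ?_ hab).le
      simp
  have h3 := hc.three_le_length
  rw [Walk.length_append, Walk.length_reverse, length_eq_dist_of_subwalk hp hp',
    length_eq_dist_of_subwalk hq hq'] at h3
  omega

end BlockGraph

theorem blockGraph_unique_shortest_path_general {V : Type*} [Fintype V]
    (G : SimpleGraph V) (hBG : IsBlockGraph G) (hconn : G.Connected)
    (v w : V) :
    ∃ p : G.Walk v w, p.IsPath ∧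
      (∀ q : G.Walk v w, p.length ≤ q.length) ∧
      (∀ q : G.Walk v w, q.IsPath → q.length ≤ p.length → q = p) ∧
      (∀ x ∈ p.support, ∀ y ∈ p.support, G.Adj x y → s(x, y) ∈ p.edges) := by
  obtain ⟨p, hp, hlen⟩ := hconn.exists_path_of_dist v w
  refine ⟨p, hp, fun q => hlen ▸ dist_le q, fun q _ hq => ?_,
    fun x hx y hy hxy => (Walk.isChordless_of_length_eq_dist hlen).mem_edges hx hy hxy⟩
  exact hBG.eq_of_length_eq_dist (le_antisymm (hlen ▸ hq) (dist_le q)) hlen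

/-- **Theorem (Statement 4).** In a connected finite simple block graph, any two
distinct vertices are joined by a unique shortest path, and this shortest path is an
induced path. -/
theorem blockGraph_unique_shortest_path {V : Type*} [Fintype V] [DecidableEq V]
    (G : SimpleGraph V) (hBG : IsBlockGraph G) (hconn : G.Connected)
    (v w : V) (hvw : v ≠ w) :
    ∃ p : G.Walk v w, p.IsPath ∧
      (∀ q : G.Walk v w, p.length ≤ q.length) ∧
      (∀ q : G.Walk v w, q.IsPath → q.length ≤ p.length → q = p) ∧
      (∀ x ∈ p.support, ∀ y ∈ p.support, G.Adj x y → s(x, y) ∈ p.edges) :=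
  blockGraph_unique_shortest_path_general G hBG hconn v w
end

section
/- Let P_1,…,P_ℓ be vertex-disjoint induced paths of a finite simple block graph G, each equipped with an orientation φ_i, and let i ≠ j. Then K_{P_ind} contains the arc (i,j) if and only if P_ind contains a strand from P_i to P_j. -/
/-!
In a block graph every cycle is biconnected, hence lies in a block, hence is a clique. So a
chordless path `p` whose ends lie on an induced path `Q` runs inside `Q`: where `p` first
leaves `Q`, the detour and a path inside `Q` would form a cycle through two non-adjacent
vertices of `p`. In particular an induced path through both ends of `P k` contains `P k`.

An arc of `K_{P_ind}` is an induced path from `φ i 0` to `φ j 1` containing no `P k`. Its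
segment from the last vertex in `P i` before the first vertex in `P j` to that vertex is a
strand: if it started at `φ i 1` or ended at `φ j 0`, the arc would pass through both ends of
`P i` or of `P j`. Conversely, prolonging a strand inside `P i` back to `φ i 0` and inside `P j`
on to `φ j 1`, a shortest path through the resulting walk is chordless. It misses `φ i 1` and
`φ j 0`, so it contains neither `P i` nor `P j`, and any other `P k` it contained would lie
in the strand.
-/

open SimpleGraph

namespace SimpleGraph.Walk

variable {V : Type*} {G : SimpleGraph V}

theorem exists_walk_to_first_mem {S : Set V} {u v : V} (p : G.Walk u v) (hv : v ∈ S) :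
    ∃ b ∈ S, ∃ q : G.Walk u b, q.support ⊆ p.support ∧
      ∀ y ∈ q.support, y ∈ S → y = b := by
  induction p with
  | nil => exact ⟨_, hv, nil, by simp, by simp⟩
  | @cons u w v h p ih =>
    by_cases hu : u ∈ S
    · exact ⟨u, hu, nil, by simp, by simp⟩
    obtain ⟨b, hb, q, hsub, hfirst⟩ := ih hv
    refine ⟨b, hb, cons h q, by simpa using List.subset_cons_of_subset _ hsub, ?_⟩
    rintro y hy hyS
    rcases List.mem_cons.mp (support_cons h q ▸ hy) with rfl | hy
    · exact absurd hyS hu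
    · exact hfirst y hy hyS

theorem exists_walk_meeting_sets_only_at_ends {S T : Set V} {u v : V} (p : G.Walk u v)
    (hu : u ∈ S) (hv : v ∈ T) :
    ∃ a ∈ S, ∃ b ∈ T, ∃ q : G.Walk a b, q.support ⊆ p.support ∧
      (∀ y ∈ q.support, y ∈ S → y = a) ∧ ∀ y ∈ q.support, y ∈ T → y = b := by
  obtain ⟨b, hb, q₁, hsub₁, hT⟩ := p.exists_walk_to_first_mem hv
  obtain ⟨a, ha, q₂, hsub₂, hS⟩ := q₁.reverse.exists_walk_to_first_mem (S := S) hu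
  have hsub : q₂.reverse.support ⊆ q₁.support := by
    simpa [support_reverse] using hsub₂
  refine ⟨a, ha, b, hb, q₂.reverse, List.Subset.trans hsub hsub₁, ?_,
    fun y hy => hT y (hsub hy)⟩
  simpa [support_reverse] using hS

theorem IsChordless.of_cons {u w v : V} {h : G.Adj u w} {p : G.Walk w v}
    (hp : (cons h p).IsPath) (hc : (cons h p).IsChordless) : p.IsChordless := by
  rw [isChordless_iff_forall_mem_edges]
  intro x y hx hy hxy
  have hu : u ∉ p.support := ((cons_isPath_iff h p).mp hp).2
  have he := hc.mem_edges (List.mem_cons_of_mem _ hx) (List.mem_cons_of_mem _ hy) hxy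
  rcases List.mem_cons.mp (edges_cons h p ▸ he) with he | he
  · rcases Sym2.eq_iff.mp he with ⟨rfl, -⟩ | ⟨-, rfl⟩
    · exact absurd hx hu
    · exact absurd hy hu
  · exact he

/-- A chord `s(p.getVert i, p.getVert j)` with `i + 2 ≤ j` short-cuts `p`. -/
theorem exists_shorter_of_not_isChordless {u v : V} {p : G.Walk u v} (hp : ¬ p.IsChordless) :
    ∃ q : G.Walk u v, q.length < p.length ∧ q.support ⊆ p.support := by
  simp only [isChordless_iff_forall_mem_edges, not_forall] at hp
  obtain ⟨x, y, hx, hy, hxy, hne⟩ := hp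
  obtain ⟨i, rfl, hi⟩ := mem_support_iff_exists_getVert.mp hx
  obtain ⟨j, rfl, hj⟩ := mem_support_iff_exists_getVert.mp hy
  clear hx hy
  wlog hij : i < j generalizing i j
  · have hji : j < i := lt_of_le_of_ne (not_lt.mp hij) fun h => hxy.ne (by rw [h])
    exact this j hj i hi hxy.symm (by rwa [Sym2.eq_swap]) hji
  have hconsec : j ≠ i + 1 := by
    rintro rfl
    exact hne ((p.mk_mem_edges_iff_exists).mpr ⟨i, by omega, rfl⟩)
  refine ⟨(p.take i).append (cons hxy (p.drop j)), ?_, ?_⟩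
  · simp only [length_append, length_cons, take_length, drop_length]
    omega
  · intro z hz
    simp only [support_append, support_cons, List.tail_cons, List.mem_append, support_take,
      drop_support_eq_support_drop_min] at hz
    rcases hz with hz | hz
    · exact List.take_subset _ _ hz
    · exact List.drop_subset _ _ hz

theorem exists_isPath_isChordless_support_subset {u v : V} (p : G.Walk u v) :
    ∃ q : G.Walk u v, q.IsPath ∧ q.IsChordless ∧ q.support ⊆ p.support := by
  classical
  induction hn : p.length using Nat.strong_induction_on generalizing p with
  | _ n ih =>
  by_cases hc : p.bypass.IsChordless
  · exact ⟨p.bypass, p.bypass_isPath, hc, p.support_bypass_subset_support⟩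
  obtain ⟨r, hr, hsub⟩ := exists_shorter_of_not_isChordless hc
  obtain ⟨q, hq, hqc, hqsub⟩ :=
    ih r.length (hn ▸ hr.trans_le p.length_bypass_le_length) r rfl
  exact ⟨q, hq, hqc,
    List.Subset.trans (List.Subset.trans hqsub hsub) p.support_bypass_subset_support⟩

end SimpleGraph.Walk

namespace SimpleGraph

variable {V : Type*} {G : SimpleGraph V}

theorem Subgraph.connected_deleteVerts_of_walk {H : G.Subgraph} {w x y : V} (q : G.Walk x y)
    (hle : q.toSubgraph ≤ H) (hw : w ∉ q.support)
    (hcover : ∀ z ∈ H.verts, z ≠ w → z ∈ q.support) : (H.deleteVerts {w}).Connected := by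
  have hne : ∀ z ∈ q.support, z ∉ ({w} : Set V) := fun z hz hzw => hw (hzw ▸ hz)
  refine q.toSubgraph_connected.mono ⟨?_, ?_⟩ ?_
  · intro z hz
    rw [Walk.mem_verts_toSubgraph] at hz
    exact ⟨hle.1 ((Walk.mem_verts_toSubgraph q).mpr hz), hne z hz⟩
  · intro a b hab
    rw [Subgraph.deleteVerts_adj]
    exact ⟨hle.1 (q.toSubgraph.edge_vert hab), hne a (Walk.mem_support_of_adj_toSubgraph hab),
      hle.1 (q.toSubgraph.edge_vert hab.symm), hne b (Walk.mem_support_of_adj_toSubgraph hab.symm),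
      hle.2 hab⟩
  · ext z
    rw [Subgraph.deleteVerts_verts, Walk.mem_verts_toSubgraph]
    exact ⟨fun hz => ⟨hle.1 ((Walk.mem_verts_toSubgraph q).mpr hz), hne z hz⟩,
      fun ⟨hz, hzw⟩ => hcover z hz hzw⟩

/-- Removing a vertex `w` of a cycle leaves the path obtained by rotating the cycle to start
at `w` and cutting off both edges at `w`. -/
theorem Walk.IsCycle.subgraphBiconnected_toSubgraph_s9 {v : V} {c : G.Walk v v} (hc : c.IsCycle) :
    SubgraphBiconnected c.toSubgraph := by
  classical
  refine ⟨c.toSubgraph_connected.coe, fun w => ?_⟩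
  by_cases hw : w ∈ c.support
  swap
  · exact (Subgraph.connected_deleteVerts_of_walk c le_rfl hw fun z hz _ =>
      (Walk.mem_verts_toSubgraph c).mp hz).coe
  have hc' := hc.rotate hw
  rw [← c.toSubgraph_rotate hw]
  generalize c.rotate w hw = c' at hc' ⊢
  cases c' with
  | nil => exact absurd hc' (fun h => h.not_nil Walk.Nil.nil)
  | cons h p =>
    have hp := ((Walk.cons_isCycle_iff p h).mp hc').1
    obtain ⟨y, h', q, hq⟩ := Walk.exists_eq_cons_of_ne h.ne p.reverse
    have hwq : w ∉ q.support := by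
      have := hp.reverse
      rw [hq, Walk.cons_isPath_iff] at this
      exact this.2
    have hpq : p.support = (w :: q.support).reverse := by
      rw [← Walk.support_cons h' q, ← hq, Walk.support_reverse, List.reverse_reverse]
    refine (Subgraph.connected_deleteVerts_of_walk q ?_ hwq ?_).coe
    · calc q.toSubgraph ≤ (Walk.cons h' q).toSubgraph := le_sup_right
        _ = p.toSubgraph := by rw [← hq, Walk.toSubgraph_reverse]
        _ ≤ (Walk.cons h p).toSubgraph := le_sup_right
    · intro z hz hzw
      rw [Walk.mem_verts_toSubgraph, Walk.support_cons, hpq] at hz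
      simpa [hzw] using hz

theorem exists_isBlock_le [Finite V] {H : G.Subgraph} (hH : SubgraphBiconnected H) :
    ∃ B : G.Subgraph, IsBlock B ∧ H ≤ B := by
  obtain ⟨B, hHB, hB⟩ :=
    (Set.toFinite {H' : G.Subgraph | SubgraphBiconnected H'}).exists_le_maximal (a := H) hH
  exact ⟨B, ⟨hB.1, fun H' hH' hle => le_antisymm (hB.2 hH' hle) hle⟩, hHB⟩

theorem IsBlockGraph.adj_of_subgraphBiconnected [Finite V] (hG : IsBlockGraph G)
    {H : G.Subgraph} (hH : SubgraphBiconnected H) {x y : V} (hx : x ∈ H.verts)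
    (hy : y ∈ H.verts) (hxy : x ≠ y) : G.Adj x y := by
  obtain ⟨B, hB, hHB⟩ := exists_isBlock_le hH
  exact B.adj_sub (hG B hB x (hHB.1 hx) y (hHB.1 hy) hxy)

theorem IsBlockGraph.adj_of_internallyDisjoint [Finite V] (hG : IsBlockGraph G) {u v : V}
    (huv : u ≠ v) {A B : G.Walk u v} (hA : A.IsPath) (hB : B.IsPath)
    (hAB : ∀ x ∈ A.support, x ∈ B.support → x = u ∨ x = v) : G.Adj u v := by
  by_contra hnadj
  have hlen : 1 < A.length := by
    rcases A with _ | ⟨h, _ | _⟩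
    · exact absurd rfl huv
    · exact absurd h hnadj
    · simp
  have hdisj : A.support.tail.Disjoint B.reverse.support.tail := by
    intro x hxA hxB
    have hxA' := List.mem_of_mem_tail hxA
    rw [Walk.support_reverse] at hxB
    have hxB' := List.mem_reverse.mp (List.mem_of_mem_tail hxB)
    rcases hAB x hxA' hxB' with rfl | rfl
    · have hA' := hA.support_nodup
      rw [← Walk.cons_tail_support] at hA'
      exact (List.nodup_cons.mp hA').1 hxA
    · have hB' := hB.reverse.support_nodup
      rw [← Walk.cons_tail_support, Walk.support_reverse] at hB'
      exact (List.nodup_cons.mp hB').1 hxB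
  have hc := hA.isCycle_append hB.reverse hdisj (Or.inl hlen)
  exact hnadj (hG.adj_of_subgraphBiconnected hc.subgraphBiconnected_toSubgraph_s9
    ((Walk.mem_verts_toSubgraph _).mpr (Walk.start_mem_support _))
    ((Walk.mem_verts_toSubgraph _).mpr (Walk.mem_support_append_iff _ _ |>.mpr
      (Or.inl A.end_mem_support))) huv)

theorem IsBlockGraph.support_subset_of_isChordless [Finite V] (hG : IsBlockGraph G) {x y : V}
    (Q : G.Walk x y) {u v : V} {p : G.Walk u v} (hp : p.IsPath) (hpc : p.IsChordless)
    (hu : u ∈ Q.support) (hv : v ∈ Q.support) : p.support ⊆ Q.support := by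
  classical
  induction p with
  | nil => simpa using hu
  | @cons u w v h p ih =>
    have huw : u ∉ p.support := ((Walk.cons_isPath_iff h p).mp hp).2
    have hw : w ∈ Q.support := by
      obtain ⟨m, hmQ, r, hrp, hrQ⟩ := p.exists_walk_to_first_mem (S := {z | z ∈ Q.support}) hv
      have hmp : m ∈ p.support := hrp r.end_mem_support
      have hum : u ≠ m := fun hum => huw (hum ▸ hmp)
      obtain ⟨B, hB, -, hBQ⟩ := Walk.exists_isPath_isChordless_support_subset
        ((Q.takeUntil u hu).reverse.append (Q.takeUntil m hmQ))
      have hadj : G.Adj u m := by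
        refine hG.adj_of_internallyDisjoint hum (Walk.cons h r).bypass_isPath hB ?_
        intro z hzA hzB
        have hzQ : z ∈ Q.support := by
          have := hBQ hzB
          simp only [Walk.support_append, Walk.support_reverse, List.mem_append,
            List.mem_reverse] at this
          rcases this with hz | hz
          · exact Q.support_takeUntil_subset_support hu hz
          · exact Q.support_takeUntil_subset_support hmQ (List.mem_of_mem_tail hz)
        rcases List.mem_cons.mp (Walk.support_bypass_subset_support _ hzA) with hz | hz
        · exact Or.inl hz
        · exact Or.inr (hrQ z hz hzQ)
      have he := hpc.mem_edges (Walk.start_mem_support _) (List.mem_cons_of_mem _ hmp) hadj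
      rcases List.mem_cons.mp (Walk.edges_cons h p ▸ he) with he | he
      · rcases Sym2.eq_iff.mp he with ⟨-, rfl⟩ | ⟨-, hmu⟩
        · exact hmQ
        · exact absurd hmu.symm hum
      · exact absurd (p.fst_mem_support_of_mem_edges he) huw
    rw [Walk.support_cons]
    exact List.cons_subset.mpr
      ⟨hu, ih ((Walk.cons_isPath_iff h p).mp hp).1 (hpc.of_cons hp) hw hv⟩

end SimpleGraph

namespace InducedPath

variable {V : Type*} {G : SimpleGraph V}

theorem isChordless (P : InducedPath G) : P.walk.IsChordless :=
  Walk.isChordless_iff_forall_mem_edges.mpr fun x y hx hy h => P.induced x hx y hy h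

def ofChordless {u v : V} (q : G.Walk u v) (hq : q.IsPath) (hqc : q.IsChordless) :
    InducedPath G :=
  ⟨u, v, q, hq, fun _ hx _ hy h => hqc.mem_edges hx hy h⟩

theorem exists_walk_of_pair_eq (P : InducedPath G) {a b : V}
    (h : ({P.first, P.last} : Set V) = {a, b}) :
    ∃ W : G.Walk a b, W.IsPath ∧ ∀ z, z ∈ W.support ↔ z ∈ P.vertexSet := by
  rcases Set.pair_eq_pair_iff.mp h with ⟨rfl, rfl⟩ | ⟨rfl, rfl⟩
  · exact ⟨P.walk, P.isPath, fun _ => Iff.rfl⟩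
  · exact ⟨P.walk.reverse, P.isPath.reverse, fun _ => by simp [vertexSet]⟩

theorem exists_walk_avoiding (P : InducedPath G) {a b : V}
    (h : ({P.first, P.last} : Set V) = {a, b}) {x : V} (hx : x ∈ P.vertexSet) (hxb : x ≠ b) :
    ∃ w : G.Walk a x, (∀ z ∈ w.support, z ∈ P.vertexSet) ∧ b ∉ w.support := by
  classical
  obtain ⟨W, hW, hWP⟩ := P.exists_walk_of_pair_eq h
  have hxW := (hWP x).mpr hx
  exact ⟨W.takeUntil x hxW, fun z hz => (hWP z).mp (W.support_takeUntil_subset_support hxW hz),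
    Walk.endpoint_notMem_support_takeUntil hW hxW hxb.symm⟩

end InducedPath

section Family

variable {V : Type*} {G : SimpleGraph V}

theorem IsOrientation.pair_eq {P : InducedPath G} {φ : Fin 2 → V} (h : IsOrientation G P φ) :
    ({P.first, P.last} : Set V) = {φ 0, φ 1} := by
  rw [← InducedPath.boundary, ← h]
  ext z
  simp [Fin.exists_fin_two, eq_comm]

theorem IsOrientation.mem_vertexSet {P : InducedPath G} {φ : Fin 2 → V}
    (h : IsOrientation G P φ) (k : Fin 2) : φ k ∈ P.vertexSet := by
  have hk : φ k ∈ P.boundary := h ▸ Set.mem_range_self k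
  rcases hk with hk | hk <;> rw [hk]
  exacts [P.walk.start_mem_support, P.walk.end_mem_support]

theorem pathContains_of_vertexSet_subset {Q P : InducedPath G}
    (h : P.vertexSet ⊆ Q.vertexSet) : PathContains G Q P := by
  refine ⟨h, fun e he => ?_⟩
  induction e using Sym2.ind with
  | _ a b =>
    exact Q.induced a (h (P.walk.fst_mem_support_of_mem_edges he)) b
      (h (P.walk.snd_mem_support_of_mem_edges he)) (P.walk.adj_of_mem_edges he)

theorem IsOrientation.pathContains [Finite V] (hG : IsBlockGraph G) {P Q : InducedPath G}
    {φ : Fin 2 → V} (h : IsOrientation G P φ) (h0 : φ 0 ∈ Q.vertexSet)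
    (h1 : φ 1 ∈ Q.vertexSet) : PathContains G Q P := by
  have hends : ∀ z ∈ ({P.first, P.last} : Set V), z ∈ Q.vertexSet := by
    rw [h.pair_eq]
    rintro z (rfl | rfl) <;> assumption
  exact pathContains_of_vertexSet_subset (hG.support_subset_of_isChordless Q.walk P.isPath
    P.isChordless (hends _ (Or.inl rfl)) (hends _ (Or.inr rfl)))

variable {ℓ : ℕ} {P : Fin ℓ → InducedPath G} {φ : Fin ℓ → Fin 2 → V} {i j : Fin ℓ}

theorem exists_isStrand_of_kArcWitness [Finite V] (hG : IsBlockGraph G)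
    (horient : ∀ k, IsOrientation G (P k) (φ k)) (hij : i ≠ j) {Q : InducedPath G}
    (hQ : KArcWitness G P φ i j Q) : ∃ R : InducedPath G, IsStrand G P φ i j R := by
  obtain ⟨hQind, hends, hQnc⟩ := hQ
  obtain ⟨W, -, hWQ⟩ := Q.exists_walk_of_pair_eq hends
  obtain ⟨a, haP, b, hbP, S, hSW, hSi, hSj⟩ := W.exists_walk_meeting_sets_only_at_ends
    ((horient i).mem_vertexSet 0) ((horient j).mem_vertexSet 1)
  obtain ⟨R, hR, hRc, hRS⟩ := S.exists_isPath_isChordless_support_subset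
  have hRQ : ∀ z ∈ R.support, z ∈ Q.vertexSet := fun z hz => (hWQ z).mp (hSW (hRS hz))
  have hφi : φ i 0 ∈ Q.vertexSet := (hWQ _).mp W.start_mem_support
  have hφj : φ j 1 ∈ Q.vertexSet := (hWQ _).mp W.end_mem_support
  refine ⟨InducedPath.ofChordless R hR hRc, hij, fun z hz => hQind (hRQ z hz), ?_, ?_, ?_, ?_,
    fun k hk => hQnc k (pathContains_of_vertexSet_subset fun z hz => hRQ z (hk.1 hz))⟩
  · intro ha
    exact hQnc i ((horient i).pathContains hG hφi (ha ▸ hRQ a R.start_mem_support))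
  · intro hb
    exact hQnc j ((horient j).pathContains hG (hb ▸ hRQ b R.end_mem_support) hφj)
  · ext z
    exact ⟨fun hz => hSi z (hRS hz.1) hz.2, fun hz => hz ▸ ⟨R.start_mem_support, haP⟩⟩
  · ext z
    exact ⟨fun hz => hSj z (hRS hz.1) hz.2, fun hz => hz ▸ ⟨R.end_mem_support, hbP⟩⟩

theorem IsStrand.not_vertexSet_subset (hdisj : PairwiseVertexDisjoint G P)
    (horient : ∀ k, IsOrientation G (P k) (φ k)) {Q : InducedPath G}
    (hQ : IsStrand G P φ i j Q) (k : Fin ℓ) :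
    ¬ (P k).vertexSet ⊆
      ((P i).vertexSet \ {φ i 1}) ∪ Q.vertexSet ∪ ((P j).vertexSet \ {φ j 0}) := by
  obtain ⟨hij, -, hfi, hlj, hQi, hQj, hQnc⟩ := hQ
  intro hsub
  by_cases hki : k = i
  · subst hki
    rcases hsub ((horient k).mem_vertexSet 1) with (⟨-, h⟩ | h) | ⟨h, -⟩
    · exact h rfl
    · exact hfi (hQi.subset ⟨h, (horient k).mem_vertexSet 1⟩).symm
    · exact Set.disjoint_left.mp (hdisj k j hij) ((horient k).mem_vertexSet 1) h
  by_cases hkj : k = j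
  · subst hkj
    rcases hsub ((horient k).mem_vertexSet 0) with (⟨h, -⟩ | h) | ⟨-, h⟩
    · exact Set.disjoint_left.mp (hdisj k i (Ne.symm hij)) ((horient k).mem_vertexSet 0) h
    · exact hlj (hQj.subset ⟨h, (horient k).mem_vertexSet 0⟩).symm
    · exact h rfl
  refine hQnc k (pathContains_of_vertexSet_subset fun z hz => ?_)
  rcases hsub hz with (⟨h, -⟩ | h) | ⟨h, -⟩
  · exact absurd h (Set.disjoint_left.mp (hdisj k i hki) hz)
  · exact h
  · exact absurd h (Set.disjoint_left.mp (hdisj k j hkj) hz)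

theorem kArc_of_isStrand (hdisj : PairwiseVertexDisjoint G P)
    (horient : ∀ k, IsOrientation G (P k) (φ k)) {Q : InducedPath G}
    (hQ : IsStrand G P φ i j Q) : KArc G P φ i j := by
  obtain ⟨-, hQind, hfi, hlj, hQi, hQj, -⟩ := id hQ
  obtain ⟨w₁, hw₁P, hw₁⟩ := (P i).exists_walk_avoiding (horient i).pair_eq
    (hQi.symm.subset rfl).2 hfi
  obtain ⟨w₃, hw₃P, hw₃⟩ := (P j).exists_walk_avoiding
    ((horient j).pair_eq.trans (Set.pair_comm _ _)) (hQj.symm.subset rfl).2 hlj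
  set W := w₁.append (Q.walk.append w₃.reverse)
  have hWU : ∀ z ∈ W.support,
      z ∈ ((P i).vertexSet \ {φ i 1}) ∪ Q.vertexSet ∪ ((P j).vertexSet \ {φ j 0}) := by
    intro z hz
    simp only [W, Walk.mem_support_append_iff, Walk.support_reverse, List.mem_reverse] at hz
    rcases hz with hz | hz | hz
    · exact Or.inl (Or.inl ⟨hw₁P z hz, fun h => hw₁ (h ▸ hz)⟩)
    · exact Or.inl (Or.inr hz)
    · exact Or.inr ⟨hw₃P z hz, fun h => hw₃ (h ▸ hz)⟩
  obtain ⟨R, hR, hRc, hRW⟩ := W.exists_isPath_isChordless_support_subset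
  refine ⟨InducedPath.ofChordless R hR hRc, fun z hz => ?_, rfl,
    fun k hk => hQ.not_vertexSet_subset hdisj horient k fun z hz => hWU z (hRW (hk.1 hz))⟩
  rcases hWU z (hRW hz) with (⟨h, -⟩ | h) | ⟨h, -⟩
  · exact Set.mem_iUnion.mpr ⟨i, h⟩
  · exact hQind h
  · exact Set.mem_iUnion.mpr ⟨j, h⟩

end Family

theorem blockGraph_KArc_iff_strand_general {V : Type*} [Fintype V]
    (G : SimpleGraph V) (hBG : IsBlockGraph G) (ℓ : ℕ) (P : Fin ℓ → InducedPath G)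
    (hdisj : PairwiseVertexDisjoint G P) (φ : Fin ℓ → Fin 2 → V)
    (horient : ∀ i, IsOrientation G (P i) (φ i)) (i j : Fin ℓ) (hij : i ≠ j) :
    KArc G P φ i j ↔ ∃ Q : InducedPath G, IsStrand G P φ i j Q :=
  ⟨fun ⟨_, hQ⟩ => exists_isStrand_of_kArcWitness hBG horient hij hQ,
    fun ⟨_, hQ⟩ => kArc_of_isStrand hdisj horient hQ⟩

/-- **Theorem (Statement 9).** For vertex-disjoint induced oriented paths of a finite
simple block graph and `i ≠ j`, the multigraph `K_{P_ind}` contains the arc `(i,j)`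
if and only if `P_ind` contains a strand from `P i` to `P j`. -/
theorem blockGraph_KArc_iff_strand {V : Type*} [Fintype V] [DecidableEq V]
    (G : SimpleGraph V) (hBG : IsBlockGraph G) (ℓ : ℕ) (P : Fin ℓ → InducedPath G)
    (hdisj : PairwiseVertexDisjoint G P) (φ : Fin ℓ → Fin 2 → V)
    (horient : ∀ i, IsOrientation G (P i) (φ i)) (i j : Fin ℓ) (hij : i ≠ j) :
    KArc G P φ i j ↔ ∃ Q : InducedPath G, IsStrand G P φ i j Q :=
  blockGraph_KArc_iff_strand_general G hBG ℓ P hdisj φ horient i j hij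
end
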